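/- Theorem: Let 𝒜 be a finite set of 2×2 real matrices each with determinant 1. Then there exists a finite set ℬ of nondegenerate 2×2 real matrices such that: (a) for every sequence (A_n) ∈ 𝒜^∞ and every sequence (B_n) ∈ ℬ^∞, ‖A_n B_n ⋯ A_1 B_1‖ ≥ α^n for a fixed α > 1 (so no sequence in 𝒜 is ℬ-right-bounded); yet (b) for every x ∈ ℝ² and every sequence (A_n) ∈ 𝒜^∞ there exists a sequence (B_n) ∈ ℬ^∞ with A_n B_n ⋯ A_1 B_1 x → 0 (so every sequence in 𝒜 is pointwise ℬ-right-bounded). -/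

import Mathlib

/-!
Take `ℬ = {A⁻¹ C : A ∈ 𝒜, C ∈ 𝒞}` for a finite set `𝒞` of matrices `C = diag (1/2, 9/4) R_u` of
determinant `9/8`, where `R_u` is the rotation taking a unit vector `u` to `(0, 1)` and `u` runs
through a fan of unit vectors, about `21°` apart, spanning a half-turn. Since `det (A_n B_n) = 9/8`
for every choice, each product `A_n B_n ⋯ A_1 B_1` has determinant `(9/8)^n`, hence norm at
least `√(9/8)^n`. On the other hand `C` halves `‖y‖²` as soon as `y` is nearly orthogonal to `u`,
and every `y` is nearly orthogonal to some `u` of the fan, because `⟪u, y⟫` changes sign along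
it. So for given `x` and `(A_n)`, the choice `B_n = A_n⁻¹ C_n`, with `C_n` adapted to the current
point, makes the product act on `x` as `C_n ⋯ C_1` and drives it to `0`.
-/

attribute [local instance] Matrix.linftyOpNormedAddCommGroup Matrix.linftyOpNormedRing

/-- `prodAB A B n = (A n * B n) * ⋯ * (A 1 * B 1)`, with `prodAB A B 0 = 1`. -/
def prodAB (A : ℕ → Matrix (Fin 2) (Fin 2) ℝ)
    (B : ℕ → Matrix (Fin 2) (Fin 2) ℝ) : ℕ → Matrix (Fin 2) (Fin 2) ℝ
  | 0 => 1
  | n + 1 => A (n + 1) * B (n + 1) * prodAB A B n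

open Matrix Filter Topology

lemma det_prodAB {A B : ℕ → Matrix (Fin 2) (Fin 2) ℝ} {d : ℝ} (h : ∀ n, (A n * B n).det = d)
    (n : ℕ) : (prodAB A B n).det = d ^ n := by
  induction n with
  | zero => simp [prodAB]
  | succ n ih => rw [prodAB, det_mul, h, ih, pow_succ']

lemma abs_add_abs_le_norm (M : Matrix (Fin 2) (Fin 2) ℝ) (i : Fin 2) :
    |M i 0| + |M i 1| ≤ ‖M‖ := by
  have h : ∑ j, ‖M i j‖₊ ≤ ‖M‖₊ := by
    rw [linfty_opNNNorm_def]
    exact Finset.le_sup (f := fun i => ∑ j, ‖M i j‖₊) (Finset.mem_univ i)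
  simpa [Fin.sum_univ_two, Real.norm_eq_abs] using NNReal.coe_le_coe.2 h

lemma abs_det_le_norm_sq (M : Matrix (Fin 2) (Fin 2) ℝ) : |M.det| ≤ ‖M‖ ^ 2 := by
  have h0 := abs_add_abs_le_norm M 0
  have h1 := abs_add_abs_le_norm M 1
  calc |M.det| ≤ |M 0 0| * |M 1 1| + |M 0 1| * |M 1 0| := by
        rw [det_fin_two, ← abs_mul, ← abs_mul]; exact abs_sub _ _
    _ ≤ (|M 0 0| + |M 0 1|) * (|M 1 0| + |M 1 1|) := by
        nlinarith [abs_nonneg (M 0 0), abs_nonneg (M 0 1), abs_nonneg (M 1 0), abs_nonneg (M 1 1)]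
    _ ≤ ‖M‖ ^ 2 := by
        rw [sq]; gcongr

lemma sqrt_pow_le_norm_prodAB {A B : ℕ → Matrix (Fin 2) (Fin 2) ℝ} {d : ℝ} (hd : 0 ≤ d)
    (h : ∀ n, (A n * B n).det = d) (n : ℕ) : √d ^ n ≤ ‖prodAB A B n‖ := by
  rw [← pow_le_pow_iff_left₀ (by positivity) (norm_nonneg _) two_ne_zero]
  calc (√d ^ n) ^ 2 = |(prodAB A B n).det| := by
        rw [← pow_mul, mul_comm, pow_mul, Real.sq_sqrt hd, det_prodAB h,
          abs_of_nonneg (pow_nonneg hd n)]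
    _ ≤ ‖prodAB A B n‖ ^ 2 := abs_det_le_norm_sq _

lemma tendsto_zero_of_dotProduct_self_tendsto_zero {ι : Type*} [Fintype ι] {Y : ℕ → ι → ℝ}
    (h : Tendsto (fun n => Y n ⬝ᵥ Y n) atTop (𝓝 0)) : Tendsto Y atTop (𝓝 0) := by
  have hsqrt : Tendsto (fun n => √(Y n ⬝ᵥ Y n)) atTop (𝓝 0) := by
    simpa using h.sqrt
  refine tendsto_zero_iff_norm_tendsto_zero.2 <|
    squeeze_zero (fun _ => norm_nonneg _) (fun n => ?_) hsqrt
  refine (pi_norm_le_iff_of_nonneg (Real.sqrt_nonneg _)).2 fun i => ?_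
  rw [Real.norm_eq_abs]
  refine Real.abs_le_sqrt ?_
  rw [sq, dotProduct]
  exact Finset.single_le_sum (f := fun j => Y n j * Y n j) (fun j _ => mul_self_nonneg _)
    (Finset.mem_univ i)

lemma exists_orbit_tendsto_zero {ι : Type*} [Fintype ι] {𝒞 : Set (Matrix ι ι ℝ)} {c : ℝ}
    (hc₀ : 0 ≤ c) (hc₁ : c < 1)
    (hcontract : ∀ y, ∃ C ∈ 𝒞, C *ᵥ y ⬝ᵥ C *ᵥ y ≤ c * (y ⬝ᵥ y)) (x : ι → ℝ) :
    ∃ Y : ℕ → ι → ℝ, Y 0 = x ∧ (∀ n, ∃ C ∈ 𝒞, Y (n + 1) = C *ᵥ Y n) ∧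
      Tendsto Y atTop (𝓝 0) := by
  choose g hg𝒞 hg using hcontract
  let Y : ℕ → ι → ℝ := fun n => Nat.rec x (fun _ y => g y *ᵥ y) n
  have hY : ∀ n, Y n ⬝ᵥ Y n ≤ c ^ n * (x ⬝ᵥ x) := by
    intro n
    induction n with
    | zero => simp [Y]
    | succ n ih =>
      calc Y (n + 1) ⬝ᵥ Y (n + 1) ≤ c * (Y n ⬝ᵥ Y n) := hg (Y n)
        _ ≤ c * (c ^ n * (x ⬝ᵥ x)) := by gcongr
        _ = c ^ (n + 1) * (x ⬝ᵥ x) := by ring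
  refine ⟨Y, rfl, fun n => ⟨g (Y n), hg𝒞 _, rfl⟩, ?_⟩
  refine tendsto_zero_of_dotProduct_self_tendsto_zero <|
    squeeze_zero (fun n => ?_) hY ?_
  · simpa using dotProduct_star_self_nonneg (Y n)
  · simpa using (tendsto_pow_atTop_nhds_zero_of_lt_one hc₀ hc₁).mul_const (x ⬝ᵥ x)

lemma exists_prodAB_mulVec_eq {𝒞 : Set (Matrix (Fin 2) (Fin 2) ℝ)}
    {A : ℕ → Matrix (Fin 2) (Fin 2) ℝ} (hA : ∀ n, IsUnit (A n).det) {Y : ℕ → Fin 2 → ℝ}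
    (hY : ∀ n, ∃ C ∈ 𝒞, Y (n + 1) = C *ᵥ Y n) :
    ∃ B : ℕ → Matrix (Fin 2) (Fin 2) ℝ, (∀ n, ∃ C ∈ 𝒞, B n = (A n)⁻¹ * C) ∧
      ∀ n, prodAB A B n *ᵥ Y 0 = Y n := by
  choose C hC𝒞 hC using hY
  -- `prodAB` never reads `B 0`, and `B (n + 1)` steers `Y n` to `Y (n + 1)`.
  refine ⟨fun n => (A n)⁻¹ * C (n - 1), fun n => ⟨_, hC𝒞 _, rfl⟩, fun n => ?_⟩
  induction n with
  | zero => simp [prodAB]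
  | succ n ih =>
    rw [prodAB, ← mulVec_mulVec, ih, ← Matrix.mul_assoc, mul_nonsing_inv _ (hA _), Matrix.one_mul,
      Nat.add_sub_cancel, hC]

lemma exists_mul_nonpos_succ_of_mul_nonpos {f : ℕ → ℝ} {n : ℕ} (hn : 0 < n)
    (h : f 0 * f n ≤ 0) : ∃ k < n, f k * f (k + 1) ≤ 0 := by
  induction n, hn using Nat.le_induction with
  | base => exact ⟨0, Nat.one_pos, h⟩
  | succ n hn ih =>
    by_cases hstep : f n * f (n + 1) ≤ 0
    · exact ⟨n, Nat.lt_succ_self n, hstep⟩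
    · -- `f n` and `f (n + 1)` have the same strict sign
      have h0n : f 0 * f n ≤ 0 := by
        refine nonpos_of_mul_nonpos_left ?_ (not_le.1 hstep)
        nlinarith [sq_nonneg (f n)]
      obtain ⟨k, hk, hk'⟩ := ih h0n
      exact ⟨k, hk.trans (Nat.lt_succ_self n), hk'⟩

lemma sq_le_or_sq_le_of_mul_nonpos {a b : ℝ} (h : a * b ≤ 0) :
    4 * a ^ 2 ≤ (a - b) ^ 2 ∨ 4 * b ^ 2 ≤ (a - b) ^ 2 := by
  rcases le_total (a ^ 2) (b ^ 2) with hab | hab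
  · left; nlinarith
  · right; nlinarith

lemma dotProduct_sq_le_or_of_mul_nonpos {ι : Type*} [Fintype ι] {u v y : ι → ℝ}
    (hu : u ⬝ᵥ u = 1) (hv : v ⬝ᵥ v = 1) (h : (u ⬝ᵥ y) * (v ⬝ᵥ y) ≤ 0) :
    2 * (u ⬝ᵥ y) ^ 2 ≤ (1 - u ⬝ᵥ v) * (y ⬝ᵥ y) ∨ 2 * (v ⬝ᵥ y) ^ 2 ≤ (1 - u ⬝ᵥ v) * (y ⬝ᵥ y) := by
  have hcs : (u ⬝ᵥ y - v ⬝ᵥ y) ^ 2 ≤ 2 * (1 - u ⬝ᵥ v) * (y ⬝ᵥ y) := by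
    have hsum : ∑ i, (u - v) i ^ 2 = 2 * (1 - u ⬝ᵥ v) := by
      simp_rw [sq]
      change (u - v) ⬝ᵥ (u - v) = _
      rw [sub_dotProduct, dotProduct_sub, dotProduct_sub, hu, hv, dotProduct_comm v u]
      ring
    have hy : ∑ i, y i ^ 2 = y ⬝ᵥ y := by simp_rw [sq]; rfl
    rw [← sub_dotProduct, ← hsum, ← hy]
    exact Finset.sum_mul_sq_le_sq_mul_sq Finset.univ (u - v) y
  rcases sq_le_or_sq_le_of_mul_nonpos h with h' | h'
  · left; linarith
  · right; linarith

noncomputable def contractionMatrix (u : Fin 2 → ℝ) : Matrix (Fin 2) (Fin 2) ℝ :=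
  diagonal ![1 / 2, 9 / 4] * !![u 1, -u 0; u 0, u 1]

lemma det_contractionMatrix {u : Fin 2 → ℝ} (hu : u ⬝ᵥ u = 1) :
    (contractionMatrix u).det = 9 / 8 := by
  simp only [dotProduct, Fin.sum_univ_two] at hu
  rw [contractionMatrix, det_mul, det_diagonal, det_fin_two_of]
  simp only [Fin.prod_univ_two, cons_val_zero, cons_val_one]
  nlinarith

lemma contractionMatrix_contracts {u y : Fin 2 → ℝ} (hu : u ⬝ᵥ u = 1)
    (h : (u ⬝ᵥ y) ^ 2 ≤ 4 / 125 * (y ⬝ᵥ y)) :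
    contractionMatrix u *ᵥ y ⬝ᵥ contractionMatrix u *ᵥ y ≤ 1 / 2 * (y ⬝ᵥ y) := by
  simp only [dotProduct, Fin.sum_univ_two] at hu h ⊢
  simp only [contractionMatrix, mulVec, dotProduct, diagonal_mul, Fin.sum_univ_two, of_apply,
    cons_val', cons_val_zero, cons_val_one, cons_val_fin_one]
  nlinarith [sq_nonneg (u 1 * y 0 - u 0 * y 1)]

-- Pythagorean unit vectors, so that all the checks below are exact rational arithmetic.
noncomputable def halfTurnDir : ℕ → Fin 2 → ℝ
  | 0 => ![1, 0]
  | 1 => ![24 / 25, 7 / 25]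
  | 2 => ![4 / 5, 3 / 5]
  | 3 => ![3 / 5, 4 / 5]
  | 4 => ![7 / 25, 24 / 25]
  | 5 => ![0, 1]
  | 6 => ![-7 / 25, 24 / 25]
  | 7 => ![-3 / 5, 4 / 5]
  | 8 => ![-4 / 5, 3 / 5]
  | 9 => ![-24 / 25, 7 / 25]
  | _ => ![-1, 0]

lemma halfTurnDir_dotProduct_self {k : ℕ} (hk : k ≤ 10) :
    halfTurnDir k ⬝ᵥ halfTurnDir k = 1 := by
  interval_cases k <;> norm_num [halfTurnDir, dotProduct, Fin.sum_univ_two]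

lemma le_halfTurnDir_dotProduct_succ {k : ℕ} (hk : k < 10) :
    117 / 125 ≤ halfTurnDir k ⬝ᵥ halfTurnDir (k + 1) := by
  interval_cases k <;> norm_num [halfTurnDir, dotProduct, Fin.sum_univ_two]

lemma halfTurnDir_ten : halfTurnDir 10 = -halfTurnDir 0 := by
  ext i; fin_cases i <;> simp [halfTurnDir]

noncomputable def contractionSet : Set (Matrix (Fin 2) (Fin 2) ℝ) :=
  (fun k => contractionMatrix (halfTurnDir k)) '' Set.Iic 10

lemma contractionSet_finite : contractionSet.Finite :=
  (Set.finite_Iic 10).image _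

lemma det_of_mem_contractionSet {C : Matrix (Fin 2) (Fin 2) ℝ} (hC : C ∈ contractionSet) :
    C.det = 9 / 8 := by
  obtain ⟨k, hk, rfl⟩ := hC
  exact det_contractionMatrix (halfTurnDir_dotProduct_self hk)

lemma exists_mem_contractionSet_contracts (y : Fin 2 → ℝ) :
    ∃ C ∈ contractionSet, C *ᵥ y ⬝ᵥ C *ᵥ y ≤ 1 / 2 * (y ⬝ᵥ y) := by
  have hends : (halfTurnDir 0 ⬝ᵥ y) * (halfTurnDir 10 ⬝ᵥ y) ≤ 0 := by
    rw [halfTurnDir_ten, neg_dotProduct, mul_neg]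
    exact neg_nonpos.2 (mul_self_nonneg _)
  obtain ⟨k, hk, hsign⟩ :=
    exists_mul_nonpos_succ_of_mul_nonpos (f := fun k => halfTurnDir k ⬝ᵥ y) (by norm_num) hends
  have hnear := le_halfTurnDir_dotProduct_succ hk
  have hyy : 0 ≤ y ⬝ᵥ y := by simpa using dotProduct_star_self_nonneg y
  have hunit := halfTurnDir_dotProduct_self hk.le
  have hunit' := halfTurnDir_dotProduct_self (Nat.succ_le_of_lt hk)
  rcases dotProduct_sq_le_or_of_mul_nonpos hunit hunit' hsign with h | h
  · exact ⟨_, ⟨k, hk.le, rfl⟩, contractionMatrix_contracts hunit (by nlinarith)⟩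
  · exact ⟨_, ⟨k + 1, hk, rfl⟩, contractionMatrix_contracts hunit' (by nlinarith)⟩

/-- For every finite set `𝒜` of 2×2 real matrices of determinant `1` there is
a finite set `ℬ` of nondegenerate 2×2 matrices such that (a) all products
`A_n B_n ⋯ A_1 B_1` grow at least like `α ^ n` for a fixed `α > 1` (so no
sequence in `𝒜` is `ℬ`-right-bounded), yet (b) every sequence in `𝒜` is
pointwise `ℬ`-right-bounded: for each `x` and `(A_n)` one can choose `(B_n)`
with `A_n B_n ⋯ A_1 B_1 x → 0`. -/
theorem stmt17 (𝒜 : Set (Matrix (Fin 2) (Fin 2) ℝ)) (h𝒜 : 𝒜.Finite)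
    (hdet : ∀ A ∈ 𝒜, A.det = 1) :
    ∃ (ℬ : Set (Matrix (Fin 2) (Fin 2) ℝ)) (α : ℝ), ℬ.Finite ∧ 1 < α ∧
      (∀ B ∈ ℬ, B.det ≠ 0) ∧
      (∀ A B : ℕ → Matrix (Fin 2) (Fin 2) ℝ, (∀ n, A n ∈ 𝒜) → (∀ n, B n ∈ ℬ) →
        ∀ n, 1 ≤ n → α ^ n ≤ ‖prodAB A B n‖) ∧
      (∀ x : Fin 2 → ℝ, ∀ A : ℕ → Matrix (Fin 2) (Fin 2) ℝ, (∀ n, A n ∈ 𝒜) →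
        ∃ B : ℕ → Matrix (Fin 2) (Fin 2) ℝ, (∀ n, B n ∈ ℬ) ∧
          Filter.Tendsto (fun n => (prodAB A B n).mulVec x) Filter.atTop
            (nhds 0)) := by
  set ℬ := Set.image2 (fun A C => A⁻¹ * C) 𝒜 contractionSet
  have hdetℬ : ∀ B ∈ ℬ, B.det = 9 / 8 := by
    rintro _ ⟨A, hA, C, hC, rfl⟩
    rw [det_mul, det_nonsing_inv, hdet A hA, Ring.inverse_one, one_mul,
      det_of_mem_contractionSet hC]
  refine ⟨ℬ, √(9 / 8), h𝒜.image2 _ contractionSet_finite,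
    (Real.lt_sqrt zero_le_one).2 (by norm_num), fun B hB => by norm_num [hdetℬ B hB], ?_, ?_⟩
  · intro A B hA hB n _
    refine sqrt_pow_le_norm_prodAB (by norm_num) (fun n => ?_) n
    rw [det_mul, hdet _ (hA n), hdetℬ _ (hB n), one_mul]
  · intro x A hA
    obtain ⟨Y, rfl, hY, hlim⟩ := exists_orbit_tendsto_zero (by norm_num) (by norm_num)
      exists_mem_contractionSet_contracts x
    obtain ⟨B, hB, hprod⟩ := exists_prodAB_mulVec_eq (A := A)
      (fun n => by rw [hdet _ (hA n)]; exact isUnit_one) hY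
    refine ⟨B, fun n => ?_, by simpa only [hprod] using hlim⟩
    obtain ⟨C, hC, hBn⟩ := hB n
    exact hBn ▸ Set.mem_image2_of_mem (hA n) hC
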